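/- arXiv:2107.11331 — 2 statements merged into one kernel-verified Lean document; each statement's English description precedes it below -/
import Mathlib

section
/- Under an asymmetric BQS, two guilds (for possibly the same faulty set F) cannot be disjoint: their intersection is nonempty. -/
/-- Downward closure `A*`: all subsets of members of `A`. -/
def downClosure {α : Type*} (A : Set (Set α)) : Set (Set α) := {S | ∃ B ∈ A, S ⊆ B}

/-- Consistency of an asymmetric BQS `QQ` for asymmetric fail-prone system `FF`. -/
def AConsistency {α : Type*} (QQ FF : α → Set (Set α)) : Prop :=
  ∀ i j, ∀ Qi ∈ QQ i, ∀ Qj ∈ QQ j,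
    ∀ Z ∈ downClosure (FF i) ∩ downClosure (FF j), ¬ Qi ∩ Qj ⊆ Z

/-- `G` is a (nonempty) guild for faulty set `B`. -/
def IsGuild {α : Type*} (QQ FF : α → Set (Set α)) (B G : Set α) : Prop :=
  G.Nonempty ∧ (∀ i ∈ G, B ∈ downClosure (FF i)) ∧ (∀ i ∈ G, ∃ Q ∈ QQ i, Q ⊆ G)

/-- two guilds of an asymmetric BQS cannot be disjoint. -/
theorem stmt10 {α : Type*} (QQ FF : α → Set (Set α))
    (hcons : AConsistency QQ FF)
    (B1 B2 G1 G2 : Set α)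
    (h1 : IsGuild QQ FF B1 G1) (h2 : IsGuild QQ FF B2 G2) :
    (G1 ∩ G2).Nonempty := by
  obtain ⟨⟨i, hi⟩, hw1, hq1⟩ := h1
  obtain ⟨⟨j, hj⟩, hw2, hq2⟩ := h2
  obtain ⟨Qi, hQi, hQiG⟩ := hq1 i hi
  obtain ⟨Qj, hQj, hQjG⟩ := hq2 j hj
  obtain ⟨Fi, hFi, -⟩ := hw1 i hi
  obtain ⟨Fj, hFj, -⟩ := hw2 j hj
  have hz : (∅ : Set α) ∈ downClosure (FF i) ∩ downClosure (FF j) :=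
    ⟨⟨Fi, hFi, Set.empty_subset _⟩, ⟨Fj, hFj, Set.empty_subset _⟩⟩
  have := hcons i j Qi hQi Qj hQj ∅ hz
  rw [Set.not_subset] at this
  obtain ⟨x, ⟨hx1, hx2⟩, -⟩ := this
  exact ⟨x, hQiG hx1, hQjG hx2⟩
end

section
/- Let P1 = {p_1,...,p_{m+k}} and P2 = {p_{m+1},...,p_n} be sets of processes sharing p_{m+1},...,p_{m+k}. Let F1 and F2 be purified asymmetric fail-prone systems over P1 and P2 with tolerated systems T1, T2 (meaning: B3 holds for the array [F^{(1)}_1,...,F^{(1)}_{m+k}, T1] over P1 and for [F^{(2)}_{m+1},...,F^{(2)}_n, T2] over P2). Define F3 over P3 = P1 ∪ P2 by: for p_i ∈ P1 \ P2, F^{(3)}_i = F^{(1)}_i ⊗ T2; for p_i ∈ P1 ∩ P2, F^{(3)}_i = F^{(1)}_i ⊗ F^{(2)}_i; for p_i ∈ P2 \ P1, F^{(3)}_i = F^{(2)}_i ⊗ T1. Then F3 satisfies the B3-condition over P3. -/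
/-- The `⊗` composition of two fail-prone systems over `Pa` and `Pb`. -/
def otimesComp {α : Type*} (Pa Pb : Set α) (A B : Set (Set α)) : Set (Set α) :=
  {S | ∃ a ∈ downClosure A, ∃ b ∈ downClosure B,
      a ∩ (Pa ∩ Pb) = b ∩ (Pa ∩ Pb) ∧ S = a ∪ b}

/-- The B3-condition over `P` for a set `S` of fail-prone systems (the components
of an array of fail-prone systems). -/
def B3on {α : Type*} (P : Set α) (S : Set (Set (Set α))) : Prop :=
  ∀ A ∈ S, ∀ B ∈ S, ∀ X ∈ A, ∀ Y ∈ B,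
    ∀ Z ∈ downClosure A ∩ downClosure B, ¬ P ⊆ X ∪ Y ∪ Z

lemma downClosure_mem_of_subset {α : Type*} {A : Set (Set α)} {S T : Set α}
    (hS : S ∈ downClosure A) (hT : T ⊆ S) : T ∈ downClosure A := by
  obtain ⟨B, hB, hSB⟩ := hS
  exact ⟨B, hB, hT.trans hSB⟩

/-- composition of (purified) asymmetric fail-prone systems.
`FF1` is the asymmetric fail-prone system over `P1`, `FF2` over `P2`
(with common processes `P1 ∩ P2`), and `T1`, `T2` are their tolerated systems;
purification means the B3-condition holds for the array extended by the
tolerated system. Then the composed system `FF3` satisfies the B3-condition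
over `P3 = P1 ∪ P2`. -/
theorem stmt14 {α : Type*} (P1 P2 : Set α)
    (FF1 FF2 FF3 : α → Set (Set α)) (T1 T2 : Set (Set α))
    (hpur1 : B3on P1 ((fun i => FF1 i) '' P1 ∪ {T1}))
    (hpur2 : B3on P2 ((fun i => FF2 i) '' P2 ∪ {T2}))
    (hdef1 : ∀ i ∈ P1 \ P2, FF3 i = otimesComp P1 P2 (FF1 i) T2)
    (hdefc : ∀ i ∈ P1 ∩ P2, FF3 i = otimesComp P1 P2 (FF1 i) (FF2 i))
    (hdef2 : ∀ i ∈ P2 \ P1, FF3 i = otimesComp P2 P1 (FF2 i) T1)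
    (hF1 : ∀ i ∈ P1, ∀ X ∈ FF1 i, X ⊆ P1)
    (hF2 : ∀ i ∈ P2, ∀ X ∈ FF2 i, X ⊆ P2)
    (hT1 : ∀ X ∈ T1, X ⊆ P1) (hT2 : ∀ X ∈ T2, X ⊆ P2) :
    ∀ i ∈ P1 ∪ P2, ∀ j ∈ P1 ∪ P2, ∀ X ∈ FF3 i, ∀ Y ∈ FF3 j,
      ∀ Z ∈ downClosure (FF3 i) ∩ downClosure (FF3 j),
        ¬ P1 ∪ P2 ⊆ X ∪ Y ∪ Z := by
  -- Key: for each i ∈ P1 ∪ P2, there is a system G in the purified array over P1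
  -- such that X ∩ P1 ∈ downClosure G for every X ∈ FF3 i.
  have key : ∀ i ∈ P1 ∪ P2, ∃ G ∈ ((fun i => FF1 i) '' P1 ∪ {T1}),
      ∀ X ∈ FF3 i, X ∩ P1 ∈ downClosure G := by
    intro i hi
    by_cases h1 : i ∈ P1
    · refine ⟨FF1 i, Or.inl ⟨i, h1, rfl⟩, ?_⟩
      intro X hX
      by_cases h2 : i ∈ P2
      · rw [hdefc i ⟨h1, h2⟩] at hX
        obtain ⟨a, ⟨Fa, hFa, haFa⟩, b, ⟨Fb, hFb, hbFb⟩, heq, rfl⟩ := hX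
        refine ⟨Fa, hFa, ?_⟩
        intro x hx
        rcases hx.1 with hxa | hxb
        · exact haFa hxa
        · have : x ∈ b ∩ (P1 ∩ P2) := ⟨hxb, hx.2, hbFb.trans (hF2 i h2 Fb hFb) hxb⟩
          rw [← heq] at this
          exact haFa this.1
      · rw [hdef1 i ⟨h1, h2⟩] at hX
        obtain ⟨a, ⟨Fa, hFa, haFa⟩, b, ⟨Fb, hFb, hbFb⟩, heq, rfl⟩ := hX
        refine ⟨Fa, hFa, ?_⟩
        intro x hx
        rcases hx.1 with hxa | hxb
        · exact haFa hxa
        · have : x ∈ b ∩ (P1 ∩ P2) := ⟨hxb, hx.2, hbFb.trans (hT2 Fb hFb) hxb⟩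
          rw [← heq] at this
          exact haFa this.1
    · have h2 : i ∈ P2 := hi.resolve_left h1
      refine ⟨T1, Or.inr rfl, ?_⟩
      intro X hX
      rw [hdef2 i ⟨h2, h1⟩] at hX
      obtain ⟨a, ⟨Fa, hFa, haFa⟩, b, ⟨Fb, hFb, hbFb⟩, heq, rfl⟩ := hX
      refine ⟨Fb, hFb, ?_⟩
      intro x hx
      rcases hx.1 with hxa | hxb
      · have : x ∈ a ∩ (P2 ∩ P1) := ⟨hxa, haFa.trans (hF2 i h2 Fa hFa) hxa, hx.2⟩
        rw [heq] at this
        exact hbFb this.1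
      · exact hbFb hxb
  intro i hi j hj X hX Y hY Z hZ hP
  obtain ⟨Gi, hGi, hGiP⟩ := key i hi
  obtain ⟨Gj, hGj, hGjP⟩ := key j hj
  obtain ⟨FX, hFX, hXF⟩ := hGiP X hX
  obtain ⟨FY, hFY, hYF⟩ := hGjP Y hY
  obtain ⟨⟨X', hX', hZX'⟩, Y', hY', hZY'⟩ := hZ
  have hZi : Z ∩ P1 ∈ downClosure Gi :=
    downClosure_mem_of_subset (hGiP X' hX') (fun x hx => ⟨hZX' hx.1, hx.2⟩)
  have hZj : Z ∩ P1 ∈ downClosure Gj :=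
    downClosure_mem_of_subset (hGjP Y' hY') (fun x hx => ⟨hZY' hx.1, hx.2⟩)
  refine hpur1 Gi hGi Gj hGj FX hFX FY hFY (Z ∩ P1) ⟨hZi, hZj⟩ ?_
  intro x hx
  rcases hP (Or.inl hx) with (hxX | hxY) | hxZ
  · exact Or.inl (Or.inl (hXF ⟨hxX, hx⟩))
  · exact Or.inl (Or.inr (hYF ⟨hxY, hx⟩))
  · exact Or.inr ⟨hxZ, hx⟩
end
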